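/- Let f : ℝⁿ → ℝ be C² satisfying the local Hessian Lipschitz condition with constants L₀, L₁ ≥ 0 and radius δ > 0, let x with g = ∇f(x) ≠ 0, H = ∇²f(x), σ > 0, and let s satisfy ‖s‖ ≤ δ and −(gᵀs + ½sᵀHs) ≥ (1/2)σ‖g‖‖s‖³ > 0. Then the ratio ρ = (f(x) − f(x+s))/(−(gᵀs + ½sᵀHs)) satisfies 1 − ρ ≤ (L₀/‖g‖ + L₁)/(3σ). -/

import Mathlib

/-!
Integrate twice along the segment `t ↦ x + t • s`. With `L = L₀ + L₁ ‖g‖`, the Hessian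
Lipschitz bound gives `‖∇f (x + t s) - g - t H s‖ ≤ L ‖s‖² t² / 2`, and then
`|f (x + s) - f x - ⟪g, s⟫ - ½ ⟪s, H s⟫| ≤ L ‖s‖³ / 6`. So `1 - ρ`, which is this remainder
divided by the model decrease, is at most `(L ‖s‖³ / 6) / (½ σ ‖g‖ ‖s‖³)`.
-/

open Set

theorem norm_le_of_norm_deriv_le_pow {E : Type*} [NormedAddCommGroup E] [NormedSpace ℝ E]
    {G G' : ℝ → E} {C b : ℝ} (k : ℕ) (h0 : G 0 = 0)
    (hG : ∀ t ∈ Icc 0 b, HasDerivAt G (G' t) t) (hG' : ∀ t ∈ Ico 0 b, ‖G' t‖ ≤ C * t ^ k) :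
    ∀ t ∈ Icc 0 b, ‖G t‖ ≤ C / (k + 1) * t ^ (k + 1) := by
  have hB (t : ℝ) : HasDerivAt (fun t ↦ C / (k + 1) * t ^ (k + 1)) (C * t ^ k) t := by
    refine ((hasDerivAt_pow (k + 1) t).const_mul (C / (k + 1))).congr_deriv ?_
    rw [Nat.add_sub_cancel]
    push_cast
    field_simp
  exact image_norm_le_of_norm_deriv_right_le_deriv_boundary
    (fun t ht ↦ (hG t ht).continuousAt.continuousWithinAt)
    (fun t ht ↦ (hG t (Ico_subset_Icc_self ht)).hasDerivWithinAt) (by simp [h0]) hB hG'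

theorem hasDerivAt_apply_add_smul {E F : Type*} [NormedAddCommGroup E] [NormedSpace ℝ E]
    [NormedAddCommGroup F] [NormedSpace ℝ F] {f : F → E} {x s : F} {t : ℝ}
    (hf : DifferentiableAt ℝ f (x + t • s)) :
    HasDerivAt (fun t : ℝ ↦ f (x + t • s)) (fderiv ℝ f (x + t • s) s) t := by
  have hline : HasDerivAt (fun t : ℝ ↦ x + t • s) s t := by
    simpa using ((hasDerivAt_id t).smul_const s).const_add x
  exact hf.hasFDerivAt.comp_hasDerivAt t hline

section Taylor

variable {F : Type*} [NormedAddCommGroup F] [InnerProductSpace ℝ F] [CompleteSpace F]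

theorem ContDiff.differentiable_gradient {f : F → ℝ} (hf : ContDiff ℝ 2 f) :
    Differentiable ℝ (gradient f) :=
  ((InnerProductSpace.toDual ℝ F).symm.contDiff.comp
    (hf.fderiv_right (m := 1) (by norm_num))).differentiable one_ne_zero

theorem abs_taylor_remainder_two_le {f : F → ℝ} (hf : ContDiff ℝ 2 f) {L : ℝ} (x s : F)
    (hH : ∀ t ∈ Icc (0 : ℝ) 1,
      ‖fderiv ℝ (gradient f) (x + t • s) - fderiv ℝ (gradient f) x‖ ≤ L * (t * ‖s‖)) :
    |f (x + s) - f x - inner ℝ (gradient f x) s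
        - 1 / 2 * inner ℝ s (fderiv ℝ (gradient f) x s)| ≤ L / 6 * ‖s‖ ^ 3 := by
  set g := gradient f x
  set H := fderiv ℝ (gradient f) x
  have hsmul (v : F) (t : ℝ) : HasDerivAt (fun t : ℝ ↦ t • v) v t := by
    simpa using (hasDerivAt_id t).smul_const v
  have hgrad_err : ∀ t ∈ Icc (0 : ℝ) 1,
      ‖gradient f (x + t • s) - g - t • H s‖ ≤ L * ‖s‖ ^ 2 / 2 * t ^ 2 := by
    have hbound := norm_le_of_norm_deriv_le_pow 1 (C := L * ‖s‖ ^ 2) (b := 1)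
      (G := fun t : ℝ ↦ gradient f (x + t • s) - g - t • H s) (by simp [g])
      (fun t _ ↦ ((hasDerivAt_apply_add_smul (hf.differentiable_gradient _)).sub_const g).sub
        (hsmul (H s) t)) fun t ht ↦ ?_
    · simpa only [Nat.cast_one, one_add_one_eq_two] using hbound
    calc ‖fderiv ℝ (gradient f) (x + t • s) s - H s‖
        ≤ ‖fderiv ℝ (gradient f) (x + t • s) - H‖ * ‖s‖ := by
          simpa using (fderiv ℝ (gradient f) (x + t • s) - H).le_opNorm s
      _ ≤ L * (t * ‖s‖) * ‖s‖ := by gcongr; exact hH t (Ico_subset_Icc_self ht)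
      _ = L * ‖s‖ ^ 2 * t ^ 1 := by ring
  have hremainder := norm_le_of_norm_deriv_le_pow 2 (C := L * ‖s‖ ^ 3 / 2) (b := 1)
    (G := fun t : ℝ ↦ f (x + t • s) - f x - t * inner ℝ g s - t ^ 2 / 2 * inner ℝ s (H s))
    (G' := fun t ↦ inner ℝ (gradient f (x + t • s) - g - t • H s) s)
    (by simp) (fun t _ ↦ ?_) (fun t ht ↦ ?_) 1 ⟨zero_le_one, le_rfl⟩
  · norm_num at hremainder
    linarith
  · refine ((((hasDerivAt_apply_add_smul (hf.differentiable two_ne_zero _)).sub_const (f x)).sub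
      ((hasDerivAt_id t).mul_const _)).sub
      (((hasDerivAt_pow 2 t).div_const 2).mul_const _)).congr_deriv ?_
    simp [inner_sub_left, inner_smul_left, real_inner_comm, inner_gradient_left]
  · calc ‖inner ℝ (gradient f (x + t • s) - g - t • H s) s‖
        ≤ ‖gradient f (x + t • s) - g - t • H s‖ * ‖s‖ := norm_inner_le_norm _ _
      _ ≤ L * ‖s‖ ^ 2 / 2 * t ^ 2 * ‖s‖ := by gcongr; exact hgrad_err t (Ico_subset_Icc_self ht)
      _ = L * ‖s‖ ^ 3 / 2 * t ^ 2 := by ring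

end Taylor

theorem one_sub_div_le_div_of_sub_le {a m c R : ℝ} (hc : 0 < c) (hcm : c ≤ m) (hR : 0 ≤ R)
    (hma : m - a ≤ R) : 1 - a / m ≤ R / c := by
  have hm : 0 < m := hc.trans_le hcm
  calc 1 - a / m = (m - a) / m := by field_simp
    _ ≤ R / m := by gcongr
    _ ≤ R / c := by gcongr

theorem stmt_17_general {n : ℕ} (f : EuclideanSpace ℝ (Fin n) → ℝ)
    (hf : ContDiff ℝ 2 f) (L₀ L₁ δ : ℝ) (hL₀ : 0 ≤ L₀) (hL₁ : 0 ≤ L₁)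
    (hLip : ∀ x y : EuclideanSpace ℝ (Fin n), ‖x - y‖ ≤ δ →
      ‖fderiv ℝ (gradient f) y - fderiv ℝ (gradient f) x‖
        ≤ (L₀ + L₁ * ‖gradient f x‖) * ‖x - y‖)
    (x s : EuclideanSpace ℝ (Fin n)) (σ : ℝ)
    (hg : gradient f x ≠ 0)
    (hsδ : ‖s‖ ≤ δ)
    (hdecr : -((inner ℝ (gradient f x) s : ℝ)
        + (1 / 2) * (inner ℝ s (fderiv ℝ (gradient f) x s) : ℝ))
      ≥ (1 / 2) * σ * ‖gradient f x‖ * ‖s‖ ^ 3)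
    (hpos : 0 < (1 / 2) * σ * ‖gradient f x‖ * ‖s‖ ^ 3) :
    1 - (f x - f (x + s)) / (-((inner ℝ (gradient f x) s : ℝ)
        + (1 / 2) * (inner ℝ s (fderiv ℝ (gradient f) x s) : ℝ)))
      ≤ (L₀ / ‖gradient f x‖ + L₁) / (3 * σ) := by
  set L := L₀ + L₁ * ‖gradient f x‖
  have hs : ‖s‖ ≠ 0 := fun h ↦ by simp [h] at hpos
  have htaylor := abs_taylor_remainder_two_le hf (L := L) x s fun t ht ↦ by
    have hdist : ‖x - (x + t • s)‖ = t * ‖s‖ := by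
      simp [norm_smul, abs_of_nonneg ht.1]
    rw [← hdist]
    exact hLip x _ (hdist ▸ (mul_le_of_le_one_left (norm_nonneg s) ht.2).trans hsδ)
  calc _ ≤ L / 6 * ‖s‖ ^ 3 / ((1 / 2) * σ * ‖gradient f x‖ * ‖s‖ ^ 3) :=
        one_sub_div_le_div_of_sub_le hpos hdecr (by positivity)
          (by linarith [(le_abs_self _).trans htaylor])
    _ = (L₀ / ‖gradient f x‖ + L₁) / (3 * σ) := by
      have hg₀ : ‖gradient f x‖ ≠ 0 := norm_ne_zero_iff.mpr hg
      field_simp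
      ring

/-- Acceptance-ratio bound for a negative-curvature-type step whose model
decrease is at least `(1/2) σ ‖g‖ ‖s‖³`, under the local Hessian Lipschitz
condition. -/
theorem stmt_17 {n : ℕ} (f : EuclideanSpace ℝ (Fin n) → ℝ)
    (hf : ContDiff ℝ 2 f) (L₀ L₁ δ : ℝ) (hL₀ : 0 ≤ L₀) (hL₁ : 0 ≤ L₁) (hδ : 0 < δ)
    (hLip : ∀ x y : EuclideanSpace ℝ (Fin n), ‖x - y‖ ≤ δ →
      ‖fderiv ℝ (gradient f) y - fderiv ℝ (gradient f) x‖
        ≤ (L₀ + L₁ * ‖gradient f x‖) * ‖x - y‖)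
    (x s : EuclideanSpace ℝ (Fin n)) (σ : ℝ) (hσ : 0 < σ)
    (hg : gradient f x ≠ 0)
    (hsδ : ‖s‖ ≤ δ)
    (hdecr : -((inner ℝ (gradient f x) s : ℝ)
        + (1 / 2) * (inner ℝ s (fderiv ℝ (gradient f) x s) : ℝ))
      ≥ (1 / 2) * σ * ‖gradient f x‖ * ‖s‖ ^ 3)
    (hpos : 0 < (1 / 2) * σ * ‖gradient f x‖ * ‖s‖ ^ 3) :
    1 - (f x - f (x + s)) / (-((inner ℝ (gradient f x) s : ℝ)
        + (1 / 2) * (inner ℝ s (fderiv ℝ (gradient f) x s) : ℝ)))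
      ≤ (L₀ / ‖gradient f x‖ + L₁) / (3 * σ) :=
  stmt_17_general f hf L₀ L₁ δ hL₀ hL₁ hLip x s σ hg hsδ hdecr hpos
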